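/- arXiv:1302.5332 — 4 statements merged into one kernel-verified Lean document; each statement's English description precedes it below -/
import Mathlib

section
/- Let O be an attribute hiding scheme (a finite set of natural bundles with pairwise disjoint member sets), let b ∈ O, and let x be an attribute with b x = none. Then the scheme (O \ {b}) ∪ split(b, x) is again an attribute hiding scheme: its bundles have pairwise disjoint member sets. -/
/-- A natural bundle: each attribute either takes a specific value (`some a`) or is
hidden (`none`). -/
abbrev Bundle (k : ℕ) (C : Fin k → ℕ) := ∀ i : Fin k, Option (Fin (C i))

/-- The set of instantiations belonging to a natural bundle. -/
def members {k : ℕ} {C : Fin k → ℕ} (b : Bundle k C) : Finset (∀ i : Fin k, Fin (C i)) :=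
  Finset.univ.filter fun ω => ∀ i, b i = none ∨ b i = some (ω i)

/-- An attribute hiding scheme: a finite set of natural bundles with pairwise disjoint
member sets. -/
def IsScheme {k : ℕ} {C : Fin k → ℕ} (O : Finset (Bundle k C)) : Prop :=
  ∀ b ∈ O, ∀ b' ∈ O, b ≠ b' → Disjoint (members b) (members b')

/-- `splitB b x` : the bundles obtained from `b` by revealing the hidden attribute `x`. -/
def splitB {k : ℕ} {C : Fin k → ℕ} (b : Bundle k C) (x : Fin k) : Finset (Bundle k C) :=
  Finset.univ.image fun j : Fin (C x) => Function.update b x (some j)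

lemma mem_members_update {k : ℕ} {C : Fin k → ℕ} {b : Bundle k C} {x : Fin k}
    (hx : b x = none) {j : Fin (C x)} {ω : ∀ i : Fin k, Fin (C i)} :
    ω ∈ members (Function.update b x (some j)) ↔ ω ∈ members b ∧ ω x = j := by
  simp only [members, Finset.mem_filter, Finset.mem_univ, true_and]
  constructor
  · intro h
    constructor
    · intro i
      rcases eq_or_ne i x with rfl | hix
      · exact Or.inl hx
      · have := h i
        rwa [Function.update_of_ne hix] at this
    · have := h x
      rw [Function.update_self] at this
      rcases this with h' | h'
      · exact absurd h' (by simp)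
      · exact (Option.some_injective _ h').symm
  · rintro ⟨h, rfl⟩
    intro i
    rcases eq_or_ne i x with rfl | hix
    · rw [Function.update_self]; exact Or.inr rfl
    · rw [Function.update_of_ne hix]; exact h i

lemma members_update_subset {k : ℕ} {C : Fin k → ℕ} {b : Bundle k C} {x : Fin k}
    (hx : b x = none) (j : Fin (C x)) :
    members (Function.update b x (some j)) ⊆ members b := by
  intro ω hω
  exact ((mem_members_update hx).1 hω).1

/-- Replacing a bundle of a scheme by the result of splitting it yields a scheme. -/
theorem stmt4 (k : ℕ) (C : Fin k → ℕ) (hC : ∀ i, 1 ≤ C i)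
    (O : Finset (Bundle k C)) (hO : IsScheme O)
    (b : Bundle k C) (hb : b ∈ O) (x : Fin k) (hx : b x = none) :
    IsScheme ((O.erase b) ∪ splitB b x) := by
  intro c hc c' hc' hne
  rw [Finset.disjoint_left]
  intro ω hω hω'
  simp only [Finset.mem_union, Finset.mem_erase, splitB, Finset.mem_image,
    Finset.mem_univ, true_and] at hc hc'
  rcases hc with ⟨hcb, hcO⟩ | ⟨j, rfl⟩
  · rcases hc' with ⟨hcb', hcO'⟩ | ⟨j, rfl⟩
    · exact Finset.disjoint_left.1 (hO c hcO c' hcO' hne) hω hω'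
    · exact Finset.disjoint_left.1 (hO c hcO b hb hcb) hω
        (members_update_subset hx j hω')
  · rcases hc' with ⟨hcb', hcO'⟩ | ⟨j', rfl⟩
    · exact Finset.disjoint_left.1 (hO b hb c' hcO' (Ne.symm hcb')) 
        (members_update_subset hx j hω) hω'
    · have h1 := (mem_members_update hx).1 hω
      have h2 := (mem_members_update hx).1 hω'
      apply hne
      have : j = j' := h1.2 ▸ h2.2 ▸ rfl
      rw [this]
end

section
/- For every attribute hiding scheme O = {b₁, …, b_t}, the auctioneer's revenue decomposes as ∑_{b ∈ O} 2(b) + ∑_{ω ∈ Ω \ ⋃_{b ∈ O} members b} 2(unit ω) = ∑_{b ∈ O} r(b) + ∑_{ω ∈ Ω} 2(unit ω). Consequently, since the last sum does not depend on the scheme, maximizing revenue over attribute hiding schemes is equivalent to maximizing ∑_{b ∈ O} r(b). -/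
/-- The pairs of distinct bidders. -/
def pairs (n : ℕ) : Finset (Fin n × Fin n) := Finset.univ.filter fun p => p.1 ≠ p.2

theorem pairs_nonempty {n : ℕ} (hn : 2 ≤ n) : (pairs n).Nonempty := by
  refine ⟨(⟨0, by omega⟩, ⟨1, by omega⟩), ?_⟩
  simp only [pairs, Finset.mem_filter, Finset.mem_univ, true_and]
  intro h
  simpa using congrArg Fin.val h

/-- The second price of a bundle of instantiations: the max over pairs of distinct
bidders of the min of the two bidders' (additive) values for the bundle. -/
noncomputable def sp {n : ℕ} (hn : 2 ≤ n) {Ω : Type*} (v : Fin n → Ω → ℝ) (B : Finset Ω) : ℝ :=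
  (pairs n).sup' (pairs_nonempty hn) fun p => min (∑ ω ∈ B, v p.1 ω) (∑ ω ∈ B, v p.2 ω)

/-- The unit bundle of an instantiation `ω`: no attribute is hidden. -/
def unitB {k : ℕ} {C : Fin k → ℕ} (ω : ∀ i : Fin k, Fin (C i)) : Bundle k C :=
  fun i => some (ω i)

/-- The marginal revenue `r b`: the extra revenue obtained by selling `b` as a bundle
rather than selling its instantiations separately. -/
noncomputable def rMarg {k : ℕ} {C : Fin k → ℕ} {n : ℕ} (hn : 2 ≤ n)
    (v : Fin n → (∀ i : Fin k, Fin (C i)) → ℝ) (b : Bundle k C) : ℝ :=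
  sp hn v (members b) - ∑ ω ∈ members b, sp hn v (members (unitB ω))

/-- The auctioneer's revenue under a scheme `O`: the second prices of the bundles of `O`
plus the second prices of the instantiations sold separately. -/
noncomputable def revenue {k : ℕ} {C : Fin k → ℕ} {n : ℕ} (hn : 2 ≤ n)
    (v : Fin n → (∀ i : Fin k, Fin (C i)) → ℝ) (O : Finset (Bundle k C)) : ℝ :=
  ∑ b ∈ O, sp hn v (members b)
    + ∑ ω ∈ Finset.univ \ O.biUnion members, sp hn v (members (unitB ω))

lemma decomp {k : ℕ} {C : Fin k → ℕ} {n : ℕ} (hn : 2 ≤ n)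
    (v : Fin n → (∀ i : Fin k, Fin (C i)) → ℝ)
    (O : Finset (Bundle k C)) (hO : IsScheme O) :
    revenue hn v O = ∑ b ∈ O, rMarg hn v b
      + ∑ ω : (∀ i : Fin k, Fin (C i)), sp hn v (members (unitB ω)) := by
  have hdisj : (↑O : Set (Bundle k C)).PairwiseDisjoint members := by
    intro b hb b' hb' hne
    exact hO b hb b' hb' hne
  have hbi : ∑ b ∈ O, ∑ ω ∈ members b, sp hn v (members (unitB ω))
      = ∑ ω ∈ O.biUnion members, sp hn v (members (unitB ω)) :=
    (Finset.sum_biUnion hdisj).symm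
  have hsd : ∑ ω ∈ Finset.univ \ O.biUnion members, sp hn v (members (unitB ω))
      + ∑ ω ∈ O.biUnion members, sp hn v (members (unitB ω))
      = ∑ ω : (∀ i : Fin k, Fin (C i)), sp hn v (members (unitB ω)) :=
    Finset.sum_sdiff (Finset.subset_univ _)
  simp only [revenue, rMarg, Finset.sum_sub_distrib]
  rw [hbi]
  linarith

/-- The revenue of a scheme decomposes as `∑_{b ∈ O} r b + ∑_{ω ∈ Ω} 2(unit ω)`; since
the second term does not depend on the scheme, maximizing revenue is equivalent to
maximizing `∑_{b ∈ O} r b`. -/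
theorem stmt5 (k : ℕ) (C : Fin k → ℕ) (hC : ∀ i, 1 ≤ C i)
    (n : ℕ) (hn : 2 ≤ n) (v : Fin n → (∀ i : Fin k, Fin (C i)) → ℝ)
    (O : Finset (Bundle k C)) (hO : IsScheme O) :
    (revenue hn v O = ∑ b ∈ O, rMarg hn v b
        + ∑ ω : (∀ i : Fin k, Fin (C i)), sp hn v (members (unitB ω))) ∧
    ∀ O' : Finset (Bundle k C), IsScheme O' →
      (revenue hn v O ≤ revenue hn v O' ↔
        ∑ b ∈ O, rMarg hn v b ≤ ∑ b ∈ O', rMarg hn v b) := by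
  refine ⟨decomp hn v O hO, fun O' hO' => ?_⟩
  rw [decomp hn v O hO, decomp hn v O' hO']
  constructor <;> intro h <;> linarith
end

section
/- If there are at most two attributes (k ≤ 2), then every attribute hiding scheme is equivalent to a tree-structured scheme; that is, for every finite set O of natural bundles with pairwise disjoint member sets there exists a tree-structured scheme containing exactly the same non-unit bundles as O. -/
/-- Tree-structured schemes: obtained from `{⊤}` (all attributes hidden) by recursively
splitting a bundle along one of its hidden attributes. -/
inductive IsTree (k : ℕ) (C : Fin k → ℕ) : Finset (Bundle k C) → Prop
  | top : IsTree k C {(fun _ => none : Bundle k C)}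
  | split (O : Finset (Bundle k C)) (b : Bundle k C) (x : Fin k) :
      IsTree k C O → b ∈ O → b x = none → IsTree k C ((O.erase b) ∪ splitB b x)


/-
With at most two attributes, a non-unit bundle other than `⊤` hides exactly one attribute, and
two bundles hiding different attributes always share an instantiation. So if `⊤` is not in the
scheme, all its non-unit bundles are rows `x = a` along one and the same attribute `x`. Split `⊤`
along `x` and then split the rows that are not in the scheme along the other attribute.
-/

section

variable {k : ℕ} {C : Fin k → ℕ}

def allHidden : Bundle k C := fun _ => none

def nonUnits (O : Finset (Bundle k C)) : Finset (Bundle k C) :=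
  O.filter fun b => ∃ i, b i = none

@[simp]
lemma mem_members {b : Bundle k C} {ω : ∀ i : Fin k, Fin (C i)} :
    ω ∈ members b ↔ ∀ i, b i = none ∨ b i = some (ω i) := by
  simp [members]

lemma mem_splitB {b c : Bundle k C} {x : Fin k} :
    c ∈ splitB b x ↔ c x ≠ none ∧ ∀ i ≠ x, c i = b i := by
  constructor
  · intro hc
    obtain ⟨j, -, rfl⟩ := Finset.mem_image.mp hc
    exact ⟨by simp, fun i hi => Function.update_of_ne hi _ _⟩
  · rintro ⟨hx, hb⟩
    obtain ⟨j, hj⟩ := Option.ne_none_iff_exists'.mp hx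
    refine Finset.mem_image.mpr ⟨j, Finset.mem_univ _, funext fun i => ?_⟩
    by_cases hi : i = x
    · subst hi; simp [hj]
    · simp [hi, hb i hi]

lemma not_disjoint_members (hC : ∀ i, 0 < C i) {b b' : Bundle k C}
    (h : ∀ i, b i = none ∨ b' i = none ∨ b i = b' i) :
    ¬ Disjoint (members b) (members b') := by
  let ω : ∀ i, Fin (C i) := fun i => (b i).getD ((b' i).getD ⟨0, hC i⟩)
  refine Finset.not_disjoint_iff.mpr ⟨ω, mem_members.mpr fun i => ?_, mem_members.mpr fun i => ?_⟩
  · cases hb : b i <;> simp [ω, hb]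
  · rcases h i with hb | hb' | hbb'
    · cases hb' : b' i <;> simp [ω, hb, hb']
    · exact Or.inl hb'
    · simp only [ω, hbb']
      cases b' i <;> simp

lemma IsScheme.eq_of_compatible (hC : ∀ i, 0 < C i) {O : Finset (Bundle k C)}
    (hO : IsScheme O) {b b' : Bundle k C} (hb : b ∈ O) (hb' : b' ∈ O)
    (h : ∀ i, b i = none ∨ b' i = none ∨ b i = b' i) : b = b' := by
  by_contra hne
  exact not_disjoint_members hC h (hO b hb b' hb' hne)

lemma IsScheme.eq_singleton_allHidden (hC : ∀ i, 0 < C i) {O : Finset (Bundle k C)}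
    (hO : IsScheme O) (htop : allHidden ∈ O) : O = {allHidden} :=
  Finset.eq_singleton_iff_unique_mem.mpr
    ⟨htop, fun _ hb => hO.eq_of_compatible hC hb htop fun _ => Or.inr (Or.inl rfl)⟩

/-- With two covering attributes `x`, `y`, two bundles hiding `x` and `y` respectively are
compatible, so they coincide and hide everything. -/
lemma IsScheme.forall_ne_none_or_forall_ne_none (hC : ∀ i, 0 < C i) {x y : Fin k}
    (hcov : ∀ i, i = x ∨ i = y) {O : Finset (Bundle k C)} (hO : IsScheme O)
    (htop : allHidden ∉ O) : (∀ b ∈ O, b x ≠ none) ∨ (∀ b ∈ O, b y ≠ none) := by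
  by_contra! ⟨⟨b, hb, hbx⟩, ⟨b', hb', hb'y⟩⟩
  have hbb' : b = b' := hO.eq_of_compatible hC hb hb' fun i => by
    rcases hcov i with rfl | rfl <;> simp [hbx, hb'y]
  subst hbb'
  have hall : b = allHidden := funext fun i => by rcases hcov i with rfl | rfl <;> assumption
  exact htop (hall ▸ hb)

lemma isTree_splitB_allHidden (x : Fin k) : IsTree k C (splitB allHidden x) := by
  simpa using IsTree.split (k := k) (C := C) {allHidden} allHidden x IsTree.top
    (Finset.mem_singleton_self _) rfl

lemma IsTree.splitB_biUnion {O S : Finset (Bundle k C)} {x : Fin k} (hO : IsTree k C O)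
    (hSO : S ⊆ O) (hSx : ∀ b ∈ S, b x = none) :
    IsTree k C ((O \ S) ∪ S.biUnion (splitB · x)) := by
  classical
  induction S using Finset.induction_on with
  | empty => simpa using hO
  | @insert a S haS ih =>
    have hsplit := IsTree.split _ a x (ih ((Finset.subset_insert a S).trans hSO)
      fun b hb => hSx b (Finset.mem_insert_of_mem hb))
      (by simp [haS, hSO (Finset.mem_insert_self a S)]) (hSx a (Finset.mem_insert_self a S))
    -- `a` hides `x` while every bundle obtained by splitting along `x` reveals it
    have hnot : a ∉ S.biUnion (splitB · x) := by
      simp only [Finset.mem_biUnion, mem_splitB, not_exists, not_and]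
      exact fun _ _ h => absurd (hSx a (Finset.mem_insert_self a S)) h
    convert hsplit using 1
    ext c
    simp only [Finset.mem_union, Finset.mem_sdiff, Finset.mem_insert, Finset.mem_biUnion,
      Finset.mem_erase]
    grind

lemma exists_isTree_nonUnits_eq {x y : Fin k} (hcov : ∀ i, i = x ∨ i = y)
    {O : Finset (Bundle k C)} (hO : ∀ b ∈ O, b x ≠ none) :
    ∃ O' : Finset (Bundle k C), IsTree k C O' ∧ nonUnits O' = nonUnits O := by
  classical
  let S := (splitB allHidden x).filter fun r => r ∉ O ∧ r y = none
  refine ⟨(splitB allHidden x \ S) ∪ S.biUnion (splitB · y),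
    (isTree_splitB_allHidden x).splitB_biUnion (Finset.filter_subset _ _)
      fun _ hr => (Finset.mem_filter.mp hr).2.2, ?_⟩
  ext b
  simp only [nonUnits, S, Finset.mem_filter, Finset.mem_union, Finset.mem_sdiff,
    Finset.mem_biUnion, mem_splitB, allHidden]
  constructor
  · rintro ⟨⟨⟨hbx, hrow⟩, hS⟩ | ⟨r, ⟨⟨hrx, -⟩, -⟩, hby, hbr⟩, i, hi⟩
    · have hiy : i = y := (hcov i).resolve_left fun h => hbx (h ▸ hi)
      subst hiy
      exact ⟨not_not.mp fun hbO => hS ⟨⟨hbx, hrow⟩, hbO, hi⟩, i, hi⟩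
    · exfalso
      rcases hcov i with rfl | rfl
      · by_cases hiy : i = y
        · exact hby (hiy ▸ hi)
        · exact hrx ((hbr i hiy).symm.trans hi)
      · exact hby hi
  · rintro ⟨hb, i, hi⟩
    have hbx := hO b hb
    have hiy : i = y := (hcov i).resolve_left fun h => hbx (h ▸ hi)
    subst hiy
    refine ⟨Or.inl ⟨⟨hbx, fun j hj => ?_⟩, fun h => h.2.1 hb⟩, i, hi⟩
    rcases hcov j with rfl | rfl
    · exact absurd rfl hj
    · exact hi

end

/-- With at most two attributes, every attribute hiding scheme is equivalent to a
tree-structured scheme (same set of non-unit bundles, i.e. bundles with some hidden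
attribute). -/
theorem stmt6 (k : ℕ) (hk : k ≤ 2) (C : Fin k → ℕ) (hC : ∀ i, 2 ≤ C i)
    (O : Finset (Bundle k C)) (hO : IsScheme O) :
    ∃ O' : Finset (Bundle k C), IsTree k C O' ∧
      O'.filter (fun b => ∃ i, b i = none) = O.filter (fun b => ∃ i, b i = none) := by
  rcases Nat.eq_zero_or_pos k with rfl | hk0
  · exact ⟨{allHidden}, IsTree.top, by simp⟩
  have hC' : ∀ i, 0 < C i := fun i => by have := hC i; omega
  obtain ⟨x, y, hcov⟩ : ∃ x y : Fin k, ∀ i, i = x ∨ i = y :=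
    ⟨⟨0, hk0⟩, ⟨k - 1, by omega⟩, fun i => by simp only [Fin.ext_iff]; omega⟩
  by_cases htop : allHidden ∈ O
  · exact ⟨O, hO.eq_singleton_allHidden hC' htop ▸ IsTree.top, rfl⟩
  rcases hO.forall_ne_none_or_forall_ne_none hC' hcov htop with hx | hy
  · exact exists_isTree_nonUnits_eq hcov hx
  · exact exists_isTree_nonUnits_eq (fun i => (hcov i).symm) hy
end

section
/- Every tree-structured scheme O other than {⊤} has a globally revealed attribute: if O is tree-structured and O ≠ {⊤}, then there exists an attribute x such that b x ≠ none for every b ∈ O. -/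
/-- Every tree-structured scheme other than `{⊤}` has a globally revealed attribute:
an attribute `x` with `b x ≠ none` for every bundle `b` of the scheme. -/
theorem stmt9 (k : ℕ) (C : Fin k → ℕ) (hC : ∀ i, 2 ≤ C i)
    (O : Finset (Bundle k C)) (hO : IsTree k C O)
    (hne : O ≠ {(fun _ => none : Bundle k C)}) :
    ∃ x : Fin k, ∀ b ∈ O, b x ≠ none := by
  induction hO with
  | top => exact absurd rfl hne
  | split O b x hO hb hbx ih =>
    by_cases hOtop : O = {(fun _ => none : Bundle k C)}
    · refine ⟨x, fun c hc => ?_⟩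
      subst hOtop
      have hbt : b = (fun _ => none : Bundle k C) := Finset.mem_singleton.mp hb
      rcases Finset.mem_union.mp hc with h | h
      · rw [hbt, Finset.erase_singleton] at h
        exact absurd h (Finset.notMem_empty c)
      · obtain ⟨j, _, rfl⟩ := Finset.mem_image.mp h
        simp [Function.update]
    · obtain ⟨y, hy⟩ := ih hOtop
      have hyx : y ≠ x := fun h => hy b hb (h ▸ hbx)
      refine ⟨y, fun c hc => ?_⟩
      rcases Finset.mem_union.mp hc with h | h
      · exact hy c (Finset.mem_of_mem_erase h)
      · obtain ⟨j, _, rfl⟩ := Finset.mem_image.mp h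
        rw [Function.update_of_ne hyx]
        exact hy b hb
end
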